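/- arXiv:2404.11454 — 2 statements merged into one kernel-verified Lean document; each statement's English description precedes it below -/
import Mathlib

section
/- For all positive integers k and m, there exists a positive integer n such that for every coloring of the vertex set {0,1}ⁿ ⊂ ℝⁿ of the n-dimensional unit hypercube with an arbitrary set of colors, there exists either a monochromatic isometric copy of {0, √(2^k)}^k (the vertex set of a k-dimensional hypercube of sidelength √(2^k)) inside {0,1}ⁿ, or a rainbow isometric copy of {0, √(2^k)}^m (the vertex set of an m-dimensional hypercube of sidelength √(2^k)) inside {0,1}ⁿ. -/
/-- The vertex set `{0, s}^m ⊂ ℝ^m` of an `m`-dimensional hypercube of sidelength `s`. -/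
def cubeVertices (m : ℕ) (s : ℝ) : Set (EuclideanSpace ℝ (Fin m)) :=
  {x | ∀ i, x i = 0 ∨ x i = s}

/-- An injective map defined on `A` into the set `X` preserving Euclidean distances;
its image is an isometric copy of `A` inside `X`. -/
def IsIsomCopyInto {m n : ℕ} (A : Set (EuclideanSpace ℝ (Fin m)))
    (X : Set (EuclideanSpace ℝ (Fin n)))
    (f : EuclideanSpace ℝ (Fin m) → EuclideanSpace ℝ (Fin n)) : Prop :=
  Set.InjOn f A ∧ (∀ x ∈ A, f x ∈ X) ∧
    ∀ x ∈ A, ∀ y ∈ A, dist (f x) (f y) = dist x y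

/-!
Take `n = R * 2^(k-1)` and cut `{0,1}ⁿ` into `R` blocks of `2^(k-1)` coordinates, so that a set
`A ⊆ Fin R` gives the vertex equal to `1` on the blocks of `A`. Inside `Fin R`, lay out a grid of
`d = k + m` rows with five slots each; a grid point `ℓ : Fin d → Fin 4` chooses one slot per row,
and two grid points differing in `h` rows give sets differing in `2h` blocks, i.e. vertices at
distance `√(2^k h)`. Hence every `0/1`-subgrid on `j` rows is an isometric copy of the `j`-cube of
side `√(2^k)`.

Colouring each `2d`-subset of `Fin R` by the set of pairs of its subsets that receive equal colours,
Ramsey's theorem places the grid so that whether two grid points have the same colour depends only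
on how their coordinates compare. Call a row irrelevant if changing it alone never changes the
colour. Comparison with auxiliary points using the values `0, …, 3` shows that two grid points of
the same colour agree in every relevant row. So either `k` rows are irrelevant, and the cube on them
is monochromatic, or `m` rows are relevant, and the cube on them is rainbow.
-/

open Finset Function

universe u

section Ramsey

variable {α κ : Type*}

def IsHomogeneous (c : Finset α → κ) (a : ℕ) (S : Finset α) : Prop :=
  ∀ A ⊆ S, ∀ B ⊆ S, #A = a → #B = a → c A = c B

/-- The ground type is quantified inside, since it is later `Fin R` for the bound `R` itself. -/
def IsRamseyBound (κ : Type*) (a N R : ℕ) : Prop :=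
  ∀ {α : Type u} (S₀ : Finset α), R ≤ #S₀ → ∀ c : Finset α → κ,
    ∃ S ⊆ S₀, #S = N ∧ IsHomogeneous c a S

lemma image_Ioi_succ_cons [DecidableEq α] {M : ℕ} (x : α) (f : Fin M → α) (i : Fin M) :
    (Ioi i.succ).image (Fin.cons x f : Fin (M + 1) → α) = (Ioi i).image f := by
  ext b
  simp [Fin.exists_fin_succ]

lemma image_Ioi_zero_cons [DecidableEq α] {M : ℕ} (x : α) (f : Fin M → α) :
    (Ioi 0).image (Fin.cons x f : Fin (M + 1) → α) = univ.image f := by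
  ext b
  simp [Fin.exists_fin_succ]

lemma exists_endHomogeneous_seq {a : ℕ} (IH : ∀ N, ∃ R, IsRamseyBound.{u} κ a N R) (M : ℕ) :
    ∃ R, ∀ {α : Type u} [DecidableEq α] (S₀ : Finset α), R ≤ #S₀ → ∀ c : Finset α → κ,
      ∃ f : Fin M → α, Injective f ∧ (∀ i, f i ∈ S₀) ∧
        ∀ i, ∃ γ, ∀ B ⊆ (Ioi i).image f, #B = a → c (insert (f i) B) = γ := by
  induction M with
  | zero =>
    exact ⟨0, fun _ _ _ => ⟨Fin.elim0, fun i => i.elim0, fun i => i.elim0, fun i => i.elim0⟩⟩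
  | succ M ih =>
    obtain ⟨R, hR⟩ := ih
    obtain ⟨R', hR'⟩ := IH (max R a)
    refine ⟨R' + 1, fun S₀ hS₀ c => ?_⟩
    obtain ⟨x, hx⟩ : S₀.Nonempty := card_pos.mp (by omega)
    obtain ⟨T, hTS₀, hT, hTc⟩ := hR' (S₀.erase x) (by rw [card_erase_of_mem hx]; omega)
      fun B => c (insert x B)
    obtain ⟨f, hf, hfT, hfc⟩ := hR T (by omega) c
    obtain ⟨B₀, hB₀T, hB₀⟩ := exists_subset_card_eq (show a ≤ #T by omega)
    have hfS₀ i : f i ∈ S₀.erase x := hTS₀ (hfT i)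
    refine ⟨Fin.cons x f, Fin.cons_injective_iff.mpr ⟨?_, hf⟩,
      Fin.cases hx fun i => mem_of_mem_erase (hfS₀ i), Fin.cases ?_ fun i => ?_⟩
    · rintro ⟨i, rfl⟩
      exact ne_of_mem_erase (hfS₀ i) rfl
    · refine ⟨c (insert x B₀), fun B hB hBc => hTc B ?_ B₀ hB₀T hBc hB₀⟩
      rw [image_Ioi_zero_cons] at hB
      exact hB.trans (image_subset_iff.mpr fun i _ => hfT i)
    · obtain ⟨γ, hγ⟩ := hfc i
      exact ⟨γ, fun B hB => hγ B (by simpa [image_Ioi_succ_cons] using hB)⟩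

theorem exists_isRamseyBound [Finite κ] (a N : ℕ) : ∃ R, IsRamseyBound.{u} κ a N R := by
  induction a generalizing N with
  | zero =>
    refine ⟨N, fun S₀ hS₀ c => ?_⟩
    obtain ⟨S, hS, hSN⟩ := exists_subset_card_eq hS₀
    exact ⟨S, hS, hSN, fun A _ B _ hA hB => by rw [card_eq_zero.mp hA, card_eq_zero.mp hB]⟩
  | succ a IH =>
    have := Fintype.ofFinite κ
    classical
    obtain ⟨R, hR⟩ := exists_endHomogeneous_seq IH (Fintype.card κ * N + 1)
    refine ⟨R, fun S₀ hS₀ c => ?_⟩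
    obtain ⟨f, hf, hfS₀, hfc⟩ := hR S₀ hS₀ c
    choose γ hγ using hfc
    obtain ⟨y, hy⟩ := Fintype.exists_lt_card_fiber_of_mul_lt_card γ (n := N) (by simp)
    obtain ⟨J, hJ, hJN⟩ := exists_subset_card_eq hy.le
    suffices hcol : ∀ A ⊆ J.image f, #A = a + 1 → c A = y from
      ⟨J.image f, image_subset_iff.mpr fun i _ => hfS₀ i, by rw [card_image_of_injective _ hf, hJN],
        fun A hA B hB hAc hBc => (hcol A hA hAc).trans (hcol B hB hBc).symm⟩
    intro A hA hAc
    obtain ⟨I, hIJ, rfl⟩ := subset_image_iff.mp hA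
    rw [card_image_of_injective _ hf] at hAc
    have hI : I.Nonempty := card_pos.mp (by omega)
    have hmin := I.min'_mem hI
    have hsplit : I.image f = insert (f (I.min' hI)) ((I.erase (I.min' hI)).image f) := by
      rw [← image_insert, insert_erase hmin]
    rw [hsplit, hγ _ _ ?_ ?_]
    · exact (mem_filter.mp (hJ (hIJ hmin))).2
    · exact image_subset_image fun i hi =>
        mem_Ioi.mpr (lt_of_le_of_ne (I.min'_le i (mem_of_mem_erase hi)) (ne_of_mem_erase hi).symm)
    · rw [card_image_of_injective _ hf, card_erase_of_mem hmin, hAc, Nat.add_sub_cancel]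

end Ramsey

section OrderInvariance

variable {κ β : Type*} [LinearOrder κ]

def IsOrderInvariant (ι : Type*) [LinearOrder ι] (χ : Finset κ → β) : Prop :=
  ∀ f f' : ι → κ, StrictMono f → StrictMono f' → ∀ p q : Finset ι,
    (χ (p.image f) = χ (q.image f) ↔ χ (p.image f') = χ (q.image f'))

variable {ι : Type*} [LinearOrder ι] [Fintype ι]

/-- The finite colouring of windows `X` to which Ramsey's theorem is applied. -/
def eqPattern (χ : Finset κ → β) (X : Finset κ) : Set (Finset ι × Finset ι) :=
  {pq | ∀ f : ι → κ, StrictMono f → univ.image f = X → χ (pq.1.image f) = χ (pq.2.image f)}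

lemma mem_eqPattern_image {χ : Finset κ → β} {f : ι → κ} (hf : StrictMono f) {p q : Finset ι} :
    (p, q) ∈ eqPattern χ (univ.image f) ↔ χ (p.image f) = χ (q.image f) := by
  refine ⟨fun h => h f hf rfl, fun h f' hf' hf'f => ?_⟩
  obtain rfl : f' = f := (hf'.range_inj hf).mp <| by
    simpa [Set.ext_iff, Finset.ext_iff] using hf'f
  exact h

end OrderInvariance

theorem exists_strictMono_isOrderInvariant (ι κ : Type*) [LinearOrder ι] [Fintype ι]
    [LinearOrder κ] [Fintype κ] :
    ∃ R, 0 < R ∧ ∀ {β : Type u} (χ : Finset (Fin R) → β),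
      ∃ G : κ → Fin R, StrictMono G ∧ IsOrderInvariant ι fun p => χ (p.image G) := by
  classical
  obtain ⟨R, hR⟩ := exists_isRamseyBound
    (κ := Set (Finset ι × Finset ι)) (Fintype.card ι) (Fintype.card κ)
  refine ⟨R + 1, R.succ_pos, fun χ => ?_⟩
  obtain ⟨S, -, hS, hhom⟩ := hR (univ : Finset (Fin (R + 1))) (by simp) (eqPattern (ι := ι) χ)
  set G : κ → Fin (R + 1) := S.orderEmbOfFin hS ∘ (Fintype.orderIsoFinOfCardEq κ rfl).symm
  have hG : StrictMono G := (S.orderEmbOfFin hS).strictMono.comp (OrderIso.strictMono _)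
  refine ⟨G, hG, fun f f' hf hf' p q => ?_⟩
  have hwin (f : ι → κ) : univ.image (G ∘ f) ⊆ S :=
    image_subset_iff.mpr fun x _ => S.orderEmbOfFin_mem hS _
  have hcard {f : ι → κ} (hf : StrictMono f) : #(univ.image (G ∘ f)) = Fintype.card ι :=
    card_image_of_injective _ (hG.comp hf).injective
  simp only [image_image, ← mem_eqPattern_image (hG.comp hf), ← mem_eqPattern_image (hG.comp hf'),
    hhom _ (hwin f) _ (hwin f') (hcard hf) (hcard hf')]

section Grid

variable {ι β : Type*}

def IsCompareInvariant (c : (ι → Fin 4) → β) : Prop :=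
  ∀ ℓ ℓ' μ μ' : ι → Fin 4, (∀ i, compare (ℓ i) (ℓ' i) = compare (μ i) (μ' i)) →
    (c ℓ = c ℓ' ↔ c μ = c μ')

def IsIrrelevant (c : (ι → Fin 4) → β) (i : ι) : Prop :=
  ∀ ℓ ℓ' : ι → Fin 4, (∀ j ≠ i, ℓ j = ℓ' j) → c ℓ = c ℓ'

variable {c : (ι → Fin 4) → β}

lemma eq_of_forall_isIrrelevant [DecidableEq ι] {s : Finset ι} (hs : ∀ i ∈ s, IsIrrelevant c i)
    {ℓ ℓ' : ι → Fin 4} (h : ∀ i ∉ s, ℓ i = ℓ' i) : c ℓ = c ℓ' := by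
  induction s using Finset.induction_on generalizing ℓ with
  | empty => exact congrArg c (funext fun i => h i (notMem_empty i))
  | insert a s ha ih =>
    have hmid : c ℓ = c (update ℓ a (ℓ' a)) :=
      hs a (mem_insert_self a s) _ _ fun j hj => (update_of_ne hj _ _).symm
    refine hmid.trans (ih (fun i hi => hs i (mem_insert_of_mem hi)) fun i hi => ?_)
    by_cases hia : i = a
    · subst hia
      exact update_self _ _ _
    · rw [update_of_ne hia]
      exact h i (by simp [hia, hi])

namespace IsCompareInvariant

lemma isIrrelevant_of_eq_update [DecidableEq ι] (hc : IsCompareInvariant c) {ℓ : ι → Fin 4} {i : ι}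
    {v : Fin 4} (hv : ℓ i < v) (h : c ℓ = c (update ℓ i v)) : IsIrrelevant c i := by
  have hcmp {μ μ' : ι → Fin 4} (hμ : ∀ j ≠ i, μ j = μ' j) (hlt : μ i < μ' i) (j : ι) :
      compare (ℓ j) (update ℓ i v j) = compare (μ j) (μ' j) := by
    by_cases hj : j = i
    · subst hj
      simp [compare_lt_iff_lt.mpr hv, compare_lt_iff_lt.mpr hlt]
    · simp [update_of_ne hj, hμ j hj]
  intro μ μ' hμ
  rcases lt_trichotomy (μ i) (μ' i) with hlt | heq | hgt
  · exact (hc _ _ _ _ (hcmp hμ hlt)).mp h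
  · exact congrArg c (funext fun j => if hj : j = i then hj ▸ heq else hμ j hj)
  · exact ((hc _ _ _ _ (hcmp (fun j hj => (hμ j hj).symm) hgt)).mp h).symm

/-- With `w` encoding the comparisons of `ℓ` and `ℓ'` by `3, 1, 0`, both `(1, w)` and
`(update 1 i 2, w)` compare like `(ℓ, ℓ')`. -/
lemma isIrrelevant_of_eq [DecidableEq ι] (hc : IsCompareInvariant c) {ℓ ℓ' : ι → Fin 4}
    (h : c ℓ = c ℓ') {i : ι} (hi : ℓ i ≠ ℓ' i) : IsIrrelevant c i := by
  let code : Ordering → Fin 4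
    | .lt => 3
    | .eq => 1
    | .gt => 0
  let w : ι → Fin 4 := fun j => code (compare (ℓ j) (ℓ' j))
  have h1 (o : Ordering) : compare 1 (code o) = o := by cases o <;> decide
  have h2 (o : Ordering) (ho : o ≠ .eq) : compare 2 (code o) = o := by
    cases o
    exacts [rfl, absurd rfl ho, rfl]
  have hz : c (fun _ => 1) = c w := (hc ℓ ℓ' _ _ fun j => (h1 _).symm).mp h
  have hz' : c (update (fun _ => 1) i 2) = c w := by
    refine (hc ℓ ℓ' _ _ fun j => ?_).mp h
    by_cases hj : j = i
    · subst hj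
      simpa using (h2 _ (by simpa using hi)).symm
    · simpa [update_of_ne hj] using (h1 _).symm
  exact hc.isIrrelevant_of_eq_update (ℓ := fun _ => 1) (by decide) (hz.trans hz'.symm)

theorem exists_const_or_injective [Fintype ι] [LinearOrder ι] (hc : IsCompareInvariant c) {k m : ℕ}
    (hkm : k + m ≤ Fintype.card ι) :
    (∃ σ : Fin k ↪ ι, ∀ ℓ ℓ', (∀ i ∉ Set.range σ, ℓ i = ℓ' i) → c ℓ = c ℓ') ∨
      ∃ σ : Fin m ↪ ι, ∀ ℓ ℓ', c ℓ = c ℓ' → ℓ ∘ σ = ℓ' ∘ σ := by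
  classical
  by_cases hk : k ≤ #{i | IsIrrelevant c i}
  · obtain ⟨s, hs, hsk⟩ := exists_subset_card_eq hk
    refine .inl ⟨(s.orderEmbOfFin hsk).toEmbedding, fun ℓ ℓ' h => ?_⟩
    refine eq_of_forall_isIrrelevant (fun i hi => (mem_filter.mp (hs hi)).2) fun i hi => h i ?_
    simpa using hi
  · have hm : m ≤ #{i | ¬IsIrrelevant c i} := by
      have := card_filter_add_card_filter_not (s := univ) (fun i => IsIrrelevant c i)
      rw [card_univ] at this
      omega
    obtain ⟨s, hs, hsm⟩ := exists_subset_card_eq hm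
    refine .inr ⟨(s.orderEmbOfFin hsm).toEmbedding, fun ℓ ℓ' h => funext fun t => ?_⟩
    by_contra hne
    exact (mem_filter.mp (hs (s.orderEmbOfFin_mem hsm t))).2 (hc.isIrrelevant_of_eq h hne)

end IsCompareInvariant

end Grid

section Window

variable {ι β : Type*}

/-- The slot `4` of each row is kept free for `windowSlot`. -/
def gridSet [Fintype ι] [LinearOrder ι] (ℓ : ι → Fin 4) : Finset (Lex (ι × Fin 5)) :=
  univ.image fun i => toLex (i, (ℓ i).castSucc)

/-- A window has two distinct slots in each row; where `ℓ i = ℓ' i` the second one is the free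
slot `4`. -/
def windowSlot (ℓ ℓ' : ι → Fin 4) (i : ι) : Bool → Fin 5
  | false => (min (ℓ i) (ℓ' i)).castSucc
  | true => if ℓ i = ℓ' i then Fin.last 4 else (max (ℓ i) (ℓ' i)).castSucc

def window (ℓ ℓ' : ι → Fin 4) (x : Lex (ι × Bool)) : Lex (ι × Fin 5) :=
  toLex ((ofLex x).1, windowSlot ℓ ℓ' (ofLex x).1 (ofLex x).2)

def positions [Fintype ι] [LinearOrder ι] (ℓ ℓ' : ι → Fin 4) : Finset (Lex (ι × Bool)) :=
  univ.image fun i => toLex (i, decide (ℓ' i < ℓ i))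

lemma window_comm (ℓ ℓ' : ι → Fin 4) : window ℓ ℓ' = window ℓ' ℓ := by
  funext x
  simp only [window]
  cases (ofLex x).2 <;> simp only [windowSlot, max_comm, min_comm, eq_comm]

lemma strictMono_window [Preorder ι] (ℓ ℓ' : ι → Fin 4) : StrictMono (window ℓ ℓ') := by
  intro x y hxy
  rw [Prod.Lex.lt_iff] at hxy ⊢
  rcases hxy with h | ⟨h, h'⟩
  · exact .inl h
  · obtain ⟨hx, hy⟩ := Bool.lt_iff.mp h'
    refine .inr ⟨h, ?_⟩
    simp only [window, ofLex_toLex, hx, hy, h, windowSlot]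
    split_ifs with heq
    · exact Fin.castSucc_lt_last _
    · exact Fin.castSucc_lt_castSucc_iff.mpr (min_lt_max.mpr heq)

variable [Fintype ι] [LinearOrder ι]

lemma image_positions_window (ℓ ℓ' : ι → Fin 4) :
    (positions ℓ ℓ').image (window ℓ ℓ') = gridSet ℓ := by
  rw [positions, gridSet, image_image]
  refine image_congr fun i _ => ?_
  simp only [comp_apply, window, ofLex_toLex]
  by_cases h : ℓ' i < ℓ i
  · simp [windowSlot, h, h.ne', h.le]
  · simp [windowSlot, h, not_lt.mp h]

lemma positions_eq_of_compare {ℓ ℓ' μ μ' : ι → Fin 4}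
    (h : ∀ i, compare (ℓ i) (ℓ' i) = compare (μ i) (μ' i)) :
    positions ℓ ℓ' = positions μ μ' ∧ positions ℓ' ℓ = positions μ' μ :=
  ⟨by simp only [positions, ← compare_gt_iff_gt, h],
    by simp only [positions, ← compare_lt_iff_lt, h]⟩

lemma isCompareInvariant_gridSet {χ : Finset (Lex (ι × Fin 5)) → β}
    (hχ : IsOrderInvariant (Lex (ι × Bool)) χ) : IsCompareInvariant fun ℓ => χ (gridSet ℓ) := by
  have key (ℓ ℓ' : ι → Fin 4) : χ (gridSet ℓ) = χ (gridSet ℓ') ↔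
      χ ((positions ℓ ℓ').image (window ℓ ℓ')) = χ ((positions ℓ' ℓ).image (window ℓ ℓ')) := by
    rw [image_positions_window, window_comm, image_positions_window]
  intro ℓ ℓ' μ μ' h
  simp only [key, hχ _ _ (strictMono_window ℓ ℓ') (strictMono_window μ μ'),
    (positions_eq_of_compare h).1, (positions_eq_of_compare h).2]

end Window

section Geometry

lemma dist_eq_of_mem_cubeVertices {j : ℕ} {a : ℝ} {x y : EuclideanSpace ℝ (Fin j)}
    (hx : x ∈ cubeVertices j a) (hy : y ∈ cubeVertices j a) :
    dist x y = √(a ^ 2 * hammingDist x.ofLp y.ofLp) := by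
  have hterm i : dist (x i) (y i) ^ 2 = if x i ≠ y i then a ^ 2 else 0 := by
    by_cases hxy : x i = y i
    · simp [hxy]
    · rw [if_pos hxy, Real.dist_eq, sq_abs]
      rcases hx i with h₁ | h₁ <;> rcases hy i with h₂ | h₂ <;> simp_all
  rw [EuclideanSpace.dist_eq, hammingDist, Finset.sum_congr rfl fun i _ => hterm i, ← sum_filter,
    sum_const, nsmul_eq_mul, mul_comm]

lemma IsIsomCopyInto.of_hammingDist {j n : ℕ} {a : ℝ}
    {F : EuclideanSpace ℝ (Fin j) → EuclideanSpace ℝ (Fin n)}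
    (hF : ∀ x ∈ cubeVertices j a, F x ∈ cubeVertices n 1)
    (hFdist : ∀ x ∈ cubeVertices j a, ∀ y ∈ cubeVertices j a,
      (hammingDist (F x).ofLp (F y).ofLp : ℝ) = a ^ 2 * hammingDist x.ofLp y.ofLp) :
    IsIsomCopyInto (cubeVertices j a) (cubeVertices n 1) F := by
  have hdist : ∀ x ∈ cubeVertices j a, ∀ y ∈ cubeVertices j a, dist (F x) (F y) = dist x y :=
    fun x hx y hy => by
      rw [dist_eq_of_mem_cubeVertices (hF x hx) (hF y hy), dist_eq_of_mem_cubeVertices hx hy,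
        one_pow, one_mul, hFdist x hx y hy]
  refine ⟨fun x hx y hy hxy => ?_, hF, hdist⟩
  rw [← dist_eq_zero, ← hdist x hx y hy, hxy, dist_self]

def blockIndicator (R b : ℕ) (A : Finset (Fin R)) : EuclideanSpace ℝ (Fin (R * b)) :=
  WithLp.toLp 2 fun j => if j.divNat ∈ A then 1 else 0

lemma blockIndicator_mem_cubeVertices (R b : ℕ) (A : Finset (Fin R)) :
    blockIndicator R b A ∈ cubeVertices (R * b) 1 := fun j => by
  by_cases h : j.divNat ∈ A <;> simp [blockIndicator, h]

lemma hammingDist_blockIndicator (R b : ℕ) (A B : Finset (Fin R)) :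
    hammingDist (blockIndicator R b A).ofLp (blockIndicator R b B).ofLp = #(symmDiff A B) * b := by
  rw [hammingDist, show #(symmDiff A B) * b = #(symmDiff A B ×ˢ (univ : Finset (Fin b))) by simp]
  refine card_equiv finProdFinEquiv.symm fun j => ?_
  rw [mem_filter]
  by_cases hA : j.divNat ∈ A <;> by_cases hB : j.divNat ∈ B <;>
    simp [blockIndicator, hA, hB, mem_symmDiff]

lemma card_symmDiff_gridSet {ι : Type*} [Fintype ι] [LinearOrder ι] (ℓ ℓ' : ι → Fin 4) :
    #(symmDiff (gridSet ℓ) (gridSet ℓ')) = 2 * hammingDist ℓ ℓ' := by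
  have hsdiff (ℓ ℓ' : ι → Fin 4) : #(gridSet ℓ \ gridSet ℓ') = hammingDist ℓ ℓ' := by
    have : gridSet ℓ \ gridSet ℓ' =
        ({i | ℓ i ≠ ℓ' i} : Finset ι).image fun i => toLex (i, (ℓ i).castSucc) := by
      ext x
      simp only [gridSet, mem_sdiff, mem_image, mem_univ, true_and, mem_filter, not_exists]
      constructor
      · rintro ⟨⟨i, rfl⟩, h⟩
        exact ⟨i, fun hi => h i (by rw [hi]), rfl⟩
      · rintro ⟨i, hi, rfl⟩
        refine ⟨⟨i, rfl⟩, fun i' h => hi ?_⟩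
        obtain ⟨rfl, h⟩ := Prod.ext_iff.mp (toLex.injective h)
        exact (Fin.castSucc_inj.mp h).symm
    rw [this, card_image_of_injective, hammingDist]
    intro i i' h
    simpa using congrArg (fun x => (ofLex x).1) h
  rw [symmDiff_def, sup_eq_union, card_union_of_disjoint disjoint_sdiff_sdiff, hsdiff, hsdiff,
    hammingDist_comm ℓ']
  ring

lemma hammingDist_extend {α ι γ : Type*} [Fintype α] [Fintype ι] [DecidableEq γ] {σ : α → ι}
    (hσ : Injective σ) (f g : α → γ) (e : ι → γ) :
    hammingDist (extend σ f e) (extend σ g e) = hammingDist f g := by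
  classical
  rw [hammingDist, hammingDist, ← card_image_of_injective _ hσ]
  congr 1
  ext i
  by_cases hi : ∃ t, σ t = i
  · obtain ⟨t, rfl⟩ := hi
    simp [hσ.extend_apply, hσ.eq_iff]
  · simp only [mem_filter, mem_univ, true_and, extend_apply' _ _ _ hi, ne_eq, not_true_eq_false,
      false_iff, mem_image, not_exists, not_and]
    exact fun t _ h => hi ⟨t, h⟩

variable {ι : Type*} {j : ℕ}

noncomputable def cubeLift (σ : Fin j ↪ ι) (x : EuclideanSpace ℝ (Fin j)) : ι → Fin 4 :=
  extend σ (fun t => if x t = 0 then 0 else 1) 0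

lemma cubeLift_apply_of_notMem_range (σ : Fin j ↪ ι) (x : EuclideanSpace ℝ (Fin j)) {i : ι}
    (hi : i ∉ Set.range σ) : cubeLift σ x i = 0 :=
  extend_apply' _ _ _ hi

lemma ite_zero_eq_ite_zero_iff {a u v : ℝ} (ha : a ≠ 0) (hu : u = 0 ∨ u = a) (hv : v = 0 ∨ v = a) :
    ((if u = 0 then 0 else 1 : Fin 4) = if v = 0 then 0 else 1) ↔ u = v := by
  rcases hu with rfl | rfl <;> rcases hv with rfl | rfl <;> simp [ha, ha.symm]

lemma eq_of_cubeLift_comp_eq {σ : Fin j ↪ ι} {a : ℝ} (ha : a ≠ 0) {x y : EuclideanSpace ℝ (Fin j)}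
    (hx : x ∈ cubeVertices j a) (hy : y ∈ cubeVertices j a)
    (h : cubeLift σ x ∘ σ = cubeLift σ y ∘ σ) : x = y := by
  ext t
  have := congrFun h t
  simp only [comp_apply, cubeLift, σ.injective.extend_apply] at this
  exact (ite_zero_eq_ite_zero_iff ha (hx t) (hy t)).mp this

lemma hammingDist_cubeLift [Fintype ι] (σ : Fin j ↪ ι) {a : ℝ} (ha : a ≠ 0)
    {x y : EuclideanSpace ℝ (Fin j)} (hx : x ∈ cubeVertices j a) (hy : y ∈ cubeVertices j a) :
    hammingDist (cubeLift σ x) (cubeLift σ y) = hammingDist x.ofLp y.ofLp := by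
  rw [cubeLift, cubeLift, hammingDist_extend σ.injective, hammingDist, hammingDist]
  exact congrArg card <| filter_congr fun t _ => (ite_zero_eq_ite_zero_iff ha (hx t) (hy t)).not

variable [Fintype ι] [LinearOrder ι] {R : ℕ}

noncomputable def cubeMap (b : ℕ) (G : Lex (ι × Fin 5) → Fin R) (σ : Fin j ↪ ι)
    (x : EuclideanSpace ℝ (Fin j)) : EuclideanSpace ℝ (Fin (R * b)) :=
  blockIndicator R b ((gridSet (cubeLift σ x)).image G)

lemma isIsomCopyInto_cubeMap {k : ℕ} (hk : 0 < k) {G : Lex (ι × Fin 5) → Fin R}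
    (hG : Injective G) (σ : Fin j ↪ ι) :
    IsIsomCopyInto (cubeVertices j √(2 ^ k)) (cubeVertices (R * 2 ^ (k - 1)) 1)
      (cubeMap (2 ^ (k - 1)) G σ) := by
  refine .of_hammingDist (fun x _ => blockIndicator_mem_cubeVertices _ _ _) fun x hx y hy => ?_
  rw [cubeMap, cubeMap, hammingDist_blockIndicator, ← image_symmDiff _ _ hG,
    card_image_of_injective _ hG, card_symmDiff_gridSet,
    hammingDist_cubeLift σ (by positivity) hx hy, Real.sq_sqrt (by positivity)]
  obtain ⟨k, rfl⟩ := Nat.exists_eq_add_of_lt hk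
  push_cast
  ring

end Geometry

theorem cube_in_cube_mono_or_rainbow_general (k m : ℕ) (hk : 0 < k) :
    ∃ n : ℕ, 0 < n ∧
      ∀ (α : Type*) (χ : EuclideanSpace ℝ (Fin n) → α),
        (∃ f : EuclideanSpace ℝ (Fin k) → EuclideanSpace ℝ (Fin n),
          IsIsomCopyInto (cubeVertices k (Real.sqrt (2 ^ k))) (cubeVertices n 1) f ∧
          ∀ x ∈ cubeVertices k (Real.sqrt (2 ^ k)),
            ∀ y ∈ cubeVertices k (Real.sqrt (2 ^ k)), χ (f x) = χ (f y)) ∨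
        (∃ f : EuclideanSpace ℝ (Fin m) → EuclideanSpace ℝ (Fin n),
          IsIsomCopyInto (cubeVertices m (Real.sqrt (2 ^ k))) (cubeVertices n 1) f ∧
          ∀ x ∈ cubeVertices m (Real.sqrt (2 ^ k)),
            ∀ y ∈ cubeVertices m (Real.sqrt (2 ^ k)), χ (f x) = χ (f y) → x = y) := by
  obtain ⟨R, hR, hRχ⟩ :=
    exists_strictMono_isOrderInvariant (Lex (Fin (k + m) × Bool)) (Lex (Fin (k + m) × Fin 5))
  refine ⟨R * 2 ^ (k - 1), by positivity, fun α χ => ?_⟩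
  obtain ⟨G, hG, hχ⟩ := hRχ fun A => χ (blockIndicator R (2 ^ (k - 1)) A)
  rcases (isCompareInvariant_gridSet hχ).exists_const_or_injective (k := k) (m := m) (by simp)
    with ⟨σ, hσ⟩ | ⟨σ, hσ⟩
  · refine .inl ⟨_, isIsomCopyInto_cubeMap hk hG.injective σ, fun x _ y _ => hσ _ _ fun i hi => ?_⟩
    rw [cubeLift_apply_of_notMem_range σ x hi, cubeLift_apply_of_notMem_range σ y hi]
  · refine .inr ⟨_, isIsomCopyInto_cubeMap hk hG.injective σ, fun x hx y hy hxy => ?_⟩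
    exact eq_of_cubeLift_comp_eq (by positivity) hx hy (hσ _ _ hxy)

/-- For all positive `k, m` there exists `n` such that every coloring of the vertex set
`{0,1}ⁿ` of the unit hypercube contains either a monochromatic isometric copy of
`{0, √(2^k)}^k` or a rainbow isometric copy of `{0, √(2^k)}^m`. -/
theorem cube_in_cube_mono_or_rainbow (k m : ℕ) (hk : 0 < k) (hm : 0 < m) :
    ∃ n : ℕ, 0 < n ∧
      ∀ (α : Type*) (χ : EuclideanSpace ℝ (Fin n) → α),
        (∃ f : EuclideanSpace ℝ (Fin k) → EuclideanSpace ℝ (Fin n),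
          IsIsomCopyInto (cubeVertices k (Real.sqrt (2 ^ k))) (cubeVertices n 1) f ∧
          ∀ x ∈ cubeVertices k (Real.sqrt (2 ^ k)),
            ∀ y ∈ cubeVertices k (Real.sqrt (2 ^ k)), χ (f x) = χ (f y)) ∨
        (∃ f : EuclideanSpace ℝ (Fin m) → EuclideanSpace ℝ (Fin n),
          IsIsomCopyInto (cubeVertices m (Real.sqrt (2 ^ k))) (cubeVertices n 1) f ∧
          ∀ x ∈ cubeVertices m (Real.sqrt (2 ^ k)),
            ∀ y ∈ cubeVertices m (Real.sqrt (2 ^ k)), χ (f x) = χ (f y) → x = y) :=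
  cube_in_cube_mono_or_rainbow_general k m hk
end

section
/- Let a and b be positive reals such that (b/a)² is rational. Then there exists a positive integer n such that for every coloring of n-dimensional Euclidean space with an arbitrary set of colors, there exists an isometric copy of the vertex set {(0,0), (a,0), (0,b), (a,b)} ⊂ ℝ² of an a × b rectangle in ℝⁿ that is either monochromatic or rainbow. -/
/-!
Write `(b/a)² = p/q` with `p, q` positive integers and work with words
`w : Fin (q+p+1) → Fin N`. Scaled one-hot vectors embed them in `ℝ^((q+p+1)N)` so that words at
Hamming distance `h` lie at Euclidean distance `√(h a²/q)`. Hence a word, together with its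
modifications on a set `X` of `q` coordinates, on a disjoint set `Y` of `p` coordinates, and on
`X ∪ Y`, is an `a × b` rectangle.

By the canonical product Ramsey theorem, for `N` large every colouring is canonical on a subgrid
`∏ Aᵢ` with `|Aᵢ| = 2`: two words get the same colour iff they agree on a fixed set `S` of
coordinates. If `|S| ≤ 1`, the spare coordinate lets `X ∪ Y` avoid `S` and the rectangle is
monochromatic; otherwise `X` and `Y` can each be made to meet `S`, and it is rainbow.
-/

open Finset

universe u v w

lemma exists_subset_card_eq_of_mapsTo {α β : Type*} {s : Finset α} {t : Finset β}
    {f : α → β} (hf : ∀ a ∈ s, f a ∈ t) (ht : t.Nonempty) {n : ℕ} (hn : #t * n ≤ #s) :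
    ∃ y ∈ t, ∃ T ⊆ s, #T = n ∧ ∀ x ∈ T, f x = y := by
  classical
  obtain ⟨y, hy, hfib⟩ := exists_le_card_fiber_of_mul_le_card_of_maps_to hf ht hn
  obtain ⟨T, hT, hTcard⟩ := exists_subset_card_eq hfib
  exact ⟨y, hy, T, hT.trans (filter_subset _ _), hTcard, fun x hx => (mem_filter.1 (hT hx)).2⟩

theorem exists_endHomogeneous_subset (C L : ℕ) : ∃ R : ℕ,
    ∀ {β : Type u} {γ : Type v} [LinearOrder β] (𝒞 : Finset γ), #𝒞 ≤ C → 𝒞.Nonempty →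
    ∀ V : Finset β, R ≤ #V → ∀ c : β → β → γ, (∀ x ∈ V, ∀ y ∈ V, x < y → c x y ∈ 𝒞) →
      ∃ T ⊆ V, #T = L ∧ ∃ d : β → γ, (∀ x ∈ T, d x ∈ 𝒞) ∧
        ∀ x ∈ T, ∀ y ∈ T, x < y → c x y = d x := by
  induction L with
  | zero =>
    exact ⟨0, fun _ _ _ V _ c _ => ⟨∅, empty_subset V, card_empty, fun x => c x x,
      by simp, by simp⟩⟩
  | succ L ih =>
    obtain ⟨R, hR⟩ := ih
    refine ⟨C * R + 1, fun 𝒞 hC hne V hV c hc => ?_⟩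
    classical
    have hVne : V.Nonempty := card_pos.1 (by omega)
    set x₀ := V.min' hVne
    have hx₀ : x₀ ∈ V := V.min'_mem hVne
    have hlt : ∀ y ∈ V.erase x₀, x₀ < y := fun y hy =>
      lt_of_le_of_ne (V.min'_le y (mem_of_mem_erase hy)) (ne_of_mem_erase hy).symm
    obtain ⟨d₀, hd₀, W, hW, hWcard, hWd₀⟩ := exists_subset_card_eq_of_mapsTo (n := R)
      (fun y hy => hc x₀ hx₀ y (mem_of_mem_erase hy) (hlt y hy)) hne
      (by rw [card_erase_of_mem hx₀]; have := Nat.mul_le_mul_right R hC; omega)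
    have hWV : W ⊆ V := hW.trans (erase_subset _ _)
    obtain ⟨T, hTW, hT, d, hd, hcd⟩ := hR 𝒞 hC hne W hWcard.ge c
      fun x hx y hy => hc x (hWV hx) y (hWV hy)
    have hx₀T : ∀ y ∈ T, x₀ < y := fun y hy => hlt y (hW (hTW hy))
    refine ⟨insert x₀ T, insert_subset hx₀ (hTW.trans hWV), ?_, Function.update d x₀ d₀,
      ?_, ?_⟩
    · rw [card_insert_of_notMem fun h => lt_irrefl _ (hx₀T _ h), hT]
    · intro x hx
      rcases mem_insert.1 hx with rfl | hx
      · simpa using hd₀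
      · simpa [(hx₀T x hx).ne'] using hd x hx
    · intro x hx y hy hxy
      have hyT : y ∈ T := by
        refine (mem_insert.1 hy).resolve_left fun hyx₀ => ?_
        rcases mem_insert.1 hx with rfl | hx
        · exact hxy.ne hyx₀.symm
        · exact ((hx₀T x hx).trans hxy).ne hyx₀.symm
      rcases mem_insert.1 hx with rfl | hx
      · simpa using hWd₀ y (hTW hyT)
      · simpa [(hx₀T x hx).ne'] using hcd x hx y hyT hxy

theorem exists_homogeneous_subset (C t : ℕ) : ∃ R : ℕ,
    ∀ {β : Type u} {γ : Type v} [LinearOrder β] (𝒞 : Finset γ), #𝒞 ≤ C → 𝒞.Nonempty →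
    ∀ V : Finset β, R ≤ #V → ∀ c : β → β → γ, (∀ x ∈ V, ∀ y ∈ V, x < y → c x y ∈ 𝒞) →
      ∃ T ⊆ V, #T = t ∧ ∃ P : γ, ∀ x ∈ T, ∀ y ∈ T, x < y → c x y = P := by
  obtain ⟨R, hR⟩ := exists_endHomogeneous_subset.{u, v} C (C * t)
  refine ⟨R, fun 𝒞 hC hne V hV c hc => ?_⟩
  obtain ⟨T, hTV, hT, d, hd, hcd⟩ := hR 𝒞 hC hne V hV c hc
  obtain ⟨P, -, T', hT'T, hT', hdP⟩ := exists_subset_card_eq_of_mapsTo hd hne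
    (hT ▸ Nat.mul_le_mul_right t hC)
  exact ⟨T', hT'T.trans hTV, hT', P, fun x hx y hy hxy =>
    (hcd x (hT'T hx) y (hT'T hy) hxy).trans (hdP x hx)⟩

lemma Fin.forall_mem_cons_iff {K : ℕ} {β : Type*} {X : Finset β} {B : Fin K → Finset β}
    {w : Fin (K + 1) → β} :
    (∀ i, w i ∈ (Fin.cons X B : Fin (K + 1) → Finset β) i) ↔
      w 0 ∈ X ∧ ∀ j, Fin.tail w j ∈ B j := by
  simp [Fin.forall_fin_succ, Fin.tail]

theorem exists_monochromatic_subgrid (K m : ℕ) : ∃ M : ℕ,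
    ∀ {β : Type u} (U : Fin K → Finset β), (∀ i, M ≤ #(U i)) →
    ∀ D : Set (Fin K → β), ∃ B : Fin K → Finset β,
      (∀ i, B i ⊆ U i) ∧ (∀ i, #(B i) = m) ∧
        ((∀ w, (∀ i, w i ∈ B i) → w ∈ D) ∨ (∀ w, (∀ i, w i ∈ B i) → w ∉ D)) := by
  induction K with
  | zero =>
    refine ⟨0, fun _ _ D => ⟨Fin.elim0, (·.elim0), (·.elim0), ?_⟩⟩
    by_cases h : (Fin.elim0 : Fin 0 → _) ∈ D
    · exact Or.inl fun w _ => Subsingleton.elim (α := Fin 0 → _) Fin.elim0 w ▸ h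
    · exact Or.inr fun w _ => Subsingleton.elim (α := Fin 0 → _) Fin.elim0 w ▸ h
  | succ K ih =>
    obtain ⟨M, hM⟩ := ih
    refine ⟨M + 2 ^ (M ^ K) * m, fun {β} U hU D => ?_⟩
    classical
    choose U' hU'U hU' using fun i : Fin K =>
      exists_subset_card_eq ((Nat.le_add_right M _).trans (hU i.succ))
    set G := Fintype.piFinset U'
    have hG : #G = M ^ K := by simp [G, Fintype.card_piFinset, hU']
    obtain ⟨σ, -, X, hXU, hX, hXσ⟩ := exists_subset_card_eq_of_mapsTo (s := U 0) (n := m)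
      (f := fun x => {v ∈ G | Fin.cons x v ∈ D}) (fun x _ => mem_powerset.2 (filter_subset _ _))
      ⟨∅, empty_mem_powerset G⟩ (by rw [card_powerset, hG]; have := hU 0; omega)
    obtain ⟨B, hBU', hB, hBσ⟩ := hM U' (fun i => (hU' i).ge) {v | v ∈ σ}
    have hD : ∀ w, (∀ i, w i ∈ (Fin.cons X B : Fin (K + 1) → Finset β) i) →
        (w ∈ D ↔ Fin.tail w ∈ σ) ∧ ∀ j, Fin.tail w j ∈ B j := by
      intro w hw
      obtain ⟨hw0, hwB⟩ := Fin.forall_mem_cons_iff.1 hw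
      refine ⟨?_, hwB⟩
      rw [← hXσ (w 0) hw0, mem_filter, Fin.cons_self_tail, Fintype.mem_piFinset]
      exact (and_iff_right fun j => hBU' j (hwB j)).symm
    refine ⟨Fin.cons X B, Fin.forall_fin_succ.2 ⟨by simpa using hXU,
      fun i => by simpa using (hBU' i).trans (hU'U i)⟩,
      Fin.forall_fin_succ.2 ⟨by simpa using hX, fun i => by simpa using hB i⟩, ?_⟩
    rcases hBσ with hin | hout
    · exact Or.inl fun w hw => (hD w hw).1.2 (hin _ (hD w hw).2)
    · exact Or.inr fun w hw h => hout _ (hD w hw).2 ((hD w hw).1.1 h)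

def IsCanonicalOn {ι β α : Type*} (f : (ι → β) → α) (A : ι → Finset β) (S : Finset ι) :
    Prop :=
  ∀ w w', (∀ i, w i ∈ A i) → (∀ i, w' i ∈ A i) → (f w = f w' ↔ ∀ i ∈ S, w i = w' i)

lemma IsCanonicalOn.mono {ι β α : Type*} {f : (ι → β) → α} {A B : ι → Finset β}
    {S : Finset ι} (hf : IsCanonicalOn f A S) (hBA : ∀ i, B i ⊆ A i) : IsCanonicalOn f B S :=
  fun w w' hw hw' => hf w w' (fun i => hBA i (hw i)) (fun i => hBA i (hw' i))

lemma Finset.exists_lt_lt_of_three_le_card {β : Type*} [LinearOrder β] {T : Finset β}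
    (hT : 3 ≤ #T) : ∃ x₀ ∈ T, ∃ x₁ ∈ T, ∃ x₂ ∈ T, x₀ < x₁ ∧ x₁ < x₂ := by
  let e := T.orderEmbOfFin rfl
  exact ⟨e ⟨0, by omega⟩, T.orderEmbOfFin_mem rfl _, e ⟨1, by omega⟩,
    T.orderEmbOfFin_mem rfl _, e ⟨2, by omega⟩, T.orderEmbOfFin_mem rfl _,
    e.strictMono (by simp [Fin.lt_def]), e.strictMono (by simp [Fin.lt_def])⟩

/- Comparing three rows `x₀ < x₁ < x₂` shows that the pattern `P` is `r` cut down to the set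
where the rows `x₀` and `x₁` agree. -/
lemma exists_cross_eq_iff {β γ α : Type*} [LinearOrder β] {g : β → γ → α} {T : Finset β}
    {G : Set γ} {r : γ → γ → Prop} {P : Set (γ × γ)}
    (hrow : ∀ x ∈ T, ∀ v ∈ G, ∀ v' ∈ G, g x v = g x v' ↔ r v v')
    (hpat : ∀ x ∈ T, ∀ y ∈ T, x < y → ∀ v ∈ G, ∀ v' ∈ G, g x v = g y v' ↔ (v, v') ∈ P)
    (hT : 3 ≤ #T) :
    ∃ D : Set γ, ∀ x ∈ T, ∀ y ∈ T, x ≠ y → ∀ v ∈ G, ∀ v' ∈ G,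
      (g x v = g y v' ↔ v ∈ D ∧ r v v') := by
  obtain ⟨x₀, hx₀, x₁, hx₁, x₂, hx₂, h₀₁, h₁₂⟩ := exists_lt_lt_of_three_le_card hT
  have hP : ∀ v ∈ G, ∀ v' ∈ G, (v, v') ∈ P ↔ g x₀ v = g x₁ v ∧ r v v' := by
    intro v hv v' hv'
    constructor
    · intro h
      have e₀₁ := (hpat x₀ hx₀ x₁ hx₁ h₀₁ v hv v' hv').2 h
      have e₀₂ := (hpat x₀ hx₀ x₂ hx₂ (h₀₁.trans h₁₂) v hv v' hv').2 h
      have hdiag := (hpat x₁ hx₁ x₂ hx₂ h₁₂ v' hv' v' hv').1 (e₀₁.symm.trans e₀₂)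
      have hr := (hrow x₀ hx₀ v hv v' hv').1
        (e₀₁.trans ((hpat x₀ hx₀ x₁ hx₁ h₀₁ v' hv' v' hv').2 hdiag).symm)
      exact ⟨e₀₁.trans ((hrow x₁ hx₁ v hv v' hv').2 hr).symm, hr⟩
    · rintro ⟨hD, hr⟩
      exact (hpat x₀ hx₀ x₁ hx₁ h₀₁ v hv v' hv').1 (hD.trans ((hrow x₁ hx₁ v hv v' hv').2 hr))
  refine ⟨{v | g x₀ v = g x₁ v}, fun x hx y hy hxy v hv v' hv' => ?_⟩
  rcases hxy.lt_or_gt with h | h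
  · exact (hpat x hx y hy h v hv v' hv').trans (hP v hv v' hv')
  · have hsymm : r v' v ↔ r v v' := by
      rw [← hrow x₀ hx₀ v' hv' v hv, ← hrow x₀ hx₀ v hv v' hv', eq_comm]
    rw [eq_comm, hpat y hy x hx h v' hv' v hv, hP v' hv' v hv, hsymm]
    refine and_congr_left fun hr => ?_
    rw [Set.mem_ofPred_eq, (hrow x₀ hx₀ v hv v' hv').2 hr, (hrow x₁ hx₁ v hv v' hv').2 hr]

lemma isCanonicalOn_cons {K : ℕ} {β α : Type*} {f : (Fin (K + 1) → β) → α} {T : Finset β}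
    {B : Fin K → Finset β} {S : Finset (Fin K)} {D : Set (Fin K → β)}
    (hrow : ∀ x ∈ T, IsCanonicalOn (fun v => f (Fin.cons x v)) B S)
    (hcross : ∀ x ∈ T, ∀ y ∈ T, x ≠ y → ∀ v v', (∀ i, v i ∈ B i) → (∀ i, v' i ∈ B i) →
      (f (Fin.cons x v) = f (Fin.cons y v') ↔ v ∈ D ∧ ∀ i ∈ S, v i = v' i))
    (hD : (∀ v, (∀ i, v i ∈ B i) → v ∈ D) ∨ (∀ v, (∀ i, v i ∈ B i) → v ∉ D)) :
    ∃ S', IsCanonicalOn f (Fin.cons T B) S' := by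
  classical
  have key : ∀ w w', (∀ i, w i ∈ (Fin.cons T B : Fin (K + 1) → Finset β) i) →
      (∀ i, w' i ∈ (Fin.cons T B : Fin (K + 1) → Finset β) i) →
      (f w = f w' ↔ if w 0 = w' 0 then ∀ i ∈ S, w i.succ = w' i.succ
        else Fin.tail w ∈ D ∧ ∀ i ∈ S, w i.succ = w' i.succ) := by
    intro w w' hw hw'
    obtain ⟨hw0, hwB⟩ := Fin.forall_mem_cons_iff.1 hw
    obtain ⟨hw0', hwB'⟩ := Fin.forall_mem_cons_iff.1 hw'
    conv_lhs => rw [← Fin.cons_self_tail w, ← Fin.cons_self_tail w']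
    split_ifs with h
    · rw [h]; exact hrow _ hw0' _ _ hwB hwB'
    · exact hcross _ hw0 _ hw0' h _ _ hwB hwB'
  rcases hD with hin | hout
  · refine ⟨S.map (Fin.succEmb K), fun w w' hw hw' => ?_⟩
    rw [key w w' hw hw', forall_mem_map]
    have := hin _ (Fin.forall_mem_cons_iff.1 hw).2
    split_ifs <;> simp [this]
  · refine ⟨Finset.cons 0 (S.map (Fin.succEmb K)) (by simp), fun w w' hw hw' => ?_⟩
    rw [key w w' hw hw', forall_mem_cons, forall_mem_map]
    have := hout _ (Fin.forall_mem_cons_iff.1 hw).2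
    split_ifs with h <;> simp [h, this]

theorem exists_subset_cross_eq_iff (C t : ℕ) : ∃ R : ℕ,
    ∀ {β : Type u} {γ : Type v} {α : Type w} [LinearOrder β] (G : Finset γ), #G ≤ C →
    ∀ (g : β → γ → α) (r : γ → γ → Prop) (T : Finset β), R ≤ #T →
    (∀ x ∈ T, ∀ v ∈ G, ∀ v' ∈ G, g x v = g x v' ↔ r v v') →
      ∃ T' ⊆ T, #T' = t ∧ ∃ D : Set γ, ∀ x ∈ T', ∀ y ∈ T', x ≠ y → ∀ v ∈ G, ∀ v' ∈ G,
        (g x v = g y v' ↔ v ∈ D ∧ r v v') := by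
  obtain ⟨R, hR⟩ := exists_homogeneous_subset.{u, v} (2 ^ (C * C)) (t + 3)
  refine ⟨R, fun G hG g r T hT hrow => ?_⟩
  classical
  obtain ⟨T₂, hT₂T, hT₂, P, hP⟩ := hR (G ×ˢ G).powerset
    (by rw [card_powerset, card_product]
        exact Nat.pow_le_pow_right two_pos (Nat.mul_le_mul hG hG))
    ⟨∅, empty_mem_powerset _⟩ T hT (fun x y => {vv ∈ G ×ˢ G | g x vv.1 = g y vv.2})
    (fun _ _ _ _ _ => mem_powerset.2 (filter_subset _ _))
  obtain ⟨D, hD⟩ := exists_cross_eq_iff (g := g) (G := (G : Set _)) (P := (P : Set _))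
    (fun x hx => hrow x (hT₂T hx))
    (fun x hx y hy hxy v hv v' hv' => by
      rw [← hP x hx y hy hxy, mem_coe, mem_filter, mem_product]
      exact (and_iff_right ⟨hv, hv'⟩).symm)
    (by omega)
  obtain ⟨T', hT'T₂, hT'⟩ := exists_subset_card_eq (show t ≤ #T₂ by omega)
  exact ⟨T', hT'T₂.trans hT₂T, hT', D, fun x hx y hy => hD x (hT'T₂ hx) y (hT'T₂ hy)⟩

/- Induction on the dimension: canonize every row `v ↦ f (x, v)`, keep many rows with the same
canonical data, make the coincidences between distinct rows uniform, and settle the first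
coordinate with a monochromatic subgrid of the resulting set `D`. -/
theorem exists_isCanonicalOn (K m : ℕ) : ∃ M : ℕ,
    ∀ {β : Type u} [LinearOrder β] (U : Fin K → Finset β), (∀ i, M ≤ #(U i)) →
    ∀ {α : Type v} (f : (Fin K → β) → α), ∃ (A : Fin K → Finset β) (S : Finset (Fin K)),
      (∀ i, A i ⊆ U i) ∧ (∀ i, #(A i) = m) ∧ IsCanonicalOn f A S := by
  induction K generalizing m with
  | zero =>
    exact ⟨0, fun _ _ _ f => ⟨Fin.elim0, ∅, (·.elim0), (·.elim0),
      fun w w' _ _ => by simp [Subsingleton.elim w w']⟩⟩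
  | succ K ih =>
    obtain ⟨m₁, hm₁⟩ := exists_monochromatic_subgrid.{u} K m
    obtain ⟨M₁, hM₁⟩ := ih m₁
    obtain ⟨R, hR⟩ := exists_subset_cross_eq_iff.{u, u, v} (m₁ ^ K) m
    refine ⟨M₁ + (2 ^ M₁) ^ K * 2 ^ K * (R + 1), fun {β} _ U hU α f => ?_⟩
    classical
    choose U' hU'U hU' using fun i : Fin K =>
      exists_subset_card_eq ((Nat.le_add_right M₁ _).trans (hU i.succ))
    choose A S hAU' hA hAS using fun x : β =>
      hM₁ U' (fun i => (hU' i).ge) (fun v => f (Fin.cons x v))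
    obtain ⟨⟨A₀, S₀⟩, -, T₁, hT₁U, hT₁, hT₁A⟩ := exists_subset_card_eq_of_mapsTo
      (s := U 0) (n := R + 1) (f := fun x => (A x, S x))
      (t := Fintype.piFinset (fun i => (U' i).powerset) ×ˢ univ)
      (fun x _ => by simp [hAU' x]) ⟨(fun _ => ∅, ∅), by simp⟩
      (by simp [Fintype.card_piFinset, hU']; have := hU 0; omega)
    simp only [Prod.mk.injEq] at hT₁A
    obtain ⟨x₀, hx₀⟩ := card_pos.1 (by omega : 0 < #T₁)
    have hA₀U : ∀ i, A₀ i ⊆ U i.succ := fun i => (hT₁A x₀ hx₀).1 ▸ (hAU' x₀ i).trans (hU'U i)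
    have hA₀ : ∀ i, #(A₀ i) = m₁ := (hT₁A x₀ hx₀).1 ▸ hA x₀
    have hrow : ∀ x ∈ T₁, IsCanonicalOn (fun v => f (Fin.cons x v)) A₀ S₀ := fun x hx => by
      simpa only [(hT₁A x hx).1, (hT₁A x hx).2] using hAS x
    obtain ⟨T, hTT₁, hT, D, hD⟩ := hR (Fintype.piFinset A₀)
      (by simp [Fintype.card_piFinset, hA₀]) (fun x v => f (Fin.cons x v))
      (fun v v' => ∀ i ∈ S₀, v i = v' i) T₁ (by omega)
      (fun x hx v hv v' hv' => hrow x hx v v' (Fintype.mem_piFinset.1 hv)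
        (Fintype.mem_piFinset.1 hv'))
    obtain ⟨B, hBA₀, hB, hBD⟩ := hm₁ A₀ (fun i => (hA₀ i).ge) D
    have hBpi : ∀ v : Fin K → β, (∀ i, v i ∈ B i) → v ∈ Fintype.piFinset A₀ := fun v hv =>
      Fintype.mem_piFinset.2 fun i => hBA₀ i (hv i)
    obtain ⟨S', hS'⟩ := isCanonicalOn_cons (fun x hx => (hrow x (hTT₁ hx)).mono hBA₀)
      (fun x hx y hy hxy v v' hv hv' => hD x hx y hy hxy v (hBpi v hv) v' (hBpi v' hv')) hBD
    refine ⟨Fin.cons T B, S', Fin.forall_fin_succ.2 ⟨by simpa using hTT₁.trans hT₁U,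
      fun i => by simpa using (hBA₀ i).trans (hA₀U i)⟩,
      Fin.forall_fin_succ.2 ⟨by simpa using hT, fun i => by simpa using hB i⟩, hS'⟩

lemma exists_disjoint_avoid_or_meet {ι : Type*} [Fintype ι] [DecidableEq ι] (S : Finset ι)
    {q p : ℕ} (hq : 0 < q) (hp : 0 < p) (hι : q + p + 1 ≤ Fintype.card ι) :
    ∃ X Y : Finset ι, Disjoint X Y ∧ #X = q ∧ #Y = p ∧
      ((∀ i ∈ S, i ∉ X ∧ i ∉ Y) ∨ ((∃ i ∈ S, i ∈ X) ∧ ∃ i ∈ S, i ∈ Y)) := by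
  by_cases hS : #S ≤ 1
  · obtain ⟨Z, hZS, hZ⟩ := exists_subset_card_eq (s := Sᶜ) (n := q + p)
      (by rw [card_compl]; omega)
    obtain ⟨X, hXZ, hX⟩ := exists_subset_card_eq (s := Z) (n := q) (by omega)
    refine ⟨X, Z \ X, disjoint_sdiff, hX, by rw [card_sdiff_of_subset hXZ]; omega,
      Or.inl fun i hi => ?_⟩
    have hiZ : i ∉ Z := fun h => mem_compl.1 (hZS h) hi
    exact ⟨fun h => hiZ (hXZ h), fun h => hiZ (sdiff_subset h)⟩
  · obtain ⟨i₀, hi₀, i₁, hi₁, hne⟩ := one_lt_card.1 (not_le.1 hS)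
    obtain ⟨Z, hiZ, -, hZ⟩ := exists_subsuperset_card_eq (subset_univ {i₀, i₁})
      (n := q + p) (by rw [card_pair hne]; omega) (by rw [card_univ]; omega)
    have hi₁Z : i₁ ∈ Z := hiZ (by simp)
    obtain ⟨X, hi₀X, hXZ, hX⟩ := exists_subsuperset_card_eq (s := {i₀}) (t := Z.erase i₁)
      (n := q) (singleton_subset_iff.2 (mem_erase.2 ⟨hne, hiZ (by simp)⟩))
      (by rw [card_singleton]; omega) (by rw [card_erase_of_mem hi₁Z]; omega)
    have hXZ' : X ⊆ Z := hXZ.trans (erase_subset _ _)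
    refine ⟨X, Z \ X, disjoint_sdiff, hX, by rw [card_sdiff_of_subset hXZ']; omega,
      Or.inr ⟨⟨i₀, hi₀, hi₀X (mem_singleton_self _)⟩, ⟨i₁, hi₁, ?_⟩⟩⟩
    exact mem_sdiff.2 ⟨hi₁Z, fun h => (notMem_erase i₁ Z) (hXZ h)⟩

section Piecewise

variable {ι β : Type*} [DecidableEq ι] {u v : ι → β}

lemma piecewise_eq_piecewise_iff (huv : ∀ i, u i ≠ v i) (X Y : Finset ι) (i : ι) :
    X.piecewise v u i = Y.piecewise v u i ↔ (i ∈ X ↔ i ∈ Y) := by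
  by_cases hX : i ∈ X <;> by_cases hY : i ∈ Y <;> simp [hX, hY, huv i, (huv i).symm]

lemma hammingDist_piecewise [Fintype ι] [DecidableEq β] (huv : ∀ i, u i ≠ v i)
    (X Y : Finset ι) : hammingDist (X.piecewise v u) (Y.piecewise v u) = #(symmDiff X Y) := by
  rw [hammingDist]
  congr 1
  ext i
  simp only [mem_filter, mem_univ, true_and, ne_eq, piecewise_eq_piecewise_iff huv, mem_symmDiff]
  tauto

end Piecewise

theorem exists_hammingRectangle_mono_or_rainbow {ι β α : Type*} [Fintype ι] [DecidableEq ι]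
    [DecidableEq β] {f : (ι → β) → α} {A : ι → Finset β} {S : Finset ι}
    (hf : IsCanonicalOn f A S) (hA : ∀ i, #(A i) = 2) {q p : ℕ} (hq : 0 < q) (hp : 0 < p)
    (hι : q + p + 1 ≤ Fintype.card ι) :
    ∃ w₁ w₂ w₃ w₄ : ι → β,
      hammingDist w₁ w₂ = q ∧ hammingDist w₃ w₄ = q ∧
      hammingDist w₁ w₃ = p ∧ hammingDist w₂ w₄ = p ∧
      hammingDist w₁ w₄ = q + p ∧ hammingDist w₂ w₃ = q + p ∧
      ((f w₁ = f w₂ ∧ f w₁ = f w₃ ∧ f w₁ = f w₄) ∨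
        (f w₁ ≠ f w₂ ∧ f w₁ ≠ f w₃ ∧ f w₁ ≠ f w₄ ∧
          f w₂ ≠ f w₃ ∧ f w₂ ≠ f w₄ ∧ f w₃ ≠ f w₄)) := by
  choose u v huv hAuv using fun i => card_eq_two.1 (hA i)
  have hmem : ∀ (X : Finset ι) i, X.piecewise v u i ∈ A i := fun X i => by
    by_cases h : i ∈ X <;> simp [h, hAuv i]
  have hcolor : ∀ X Y : Finset ι,
      f (X.piecewise v u) = f (Y.piecewise v u) ↔ ∀ i ∈ S, (i ∈ X ↔ i ∈ Y) := fun X Y => by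
    simp only [hf _ _ (hmem X) (hmem Y), piecewise_eq_piecewise_iff huv]
  obtain ⟨X, Y, hXY, hX, hY, hS⟩ := exists_disjoint_avoid_or_meet S hq hp hι
  refine ⟨(∅ : Finset ι).piecewise v u, X.piecewise v u, Y.piecewise v u,
    (X ∪ Y).piecewise v u, ?_⟩
  have hXY' : ∀ i, i ∈ X → i ∉ Y := fun i hi => disjoint_left.1 hXY hi
  have hsymm : ∀ Z W T : Finset ι, (∀ i, (i ∈ Z ↔ i ∉ W) ↔ i ∈ T) → symmDiff Z W = T :=
    fun Z W T h => by ext i; rw [← h, mem_symmDiff]; tauto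
  have h₁₂ : symmDiff ∅ X = X := hsymm _ _ _ fun i => by simp
  have h₁₃ : symmDiff ∅ Y = Y := hsymm _ _ _ fun i => by simp
  have h₁₄ : symmDiff ∅ (X ∪ Y) = X ∪ Y := hsymm _ _ _ fun i => by simp; tauto
  have h₃₄ : symmDiff Y (X ∪ Y) = X := hsymm _ _ _ fun i => by have := hXY' i; simp; tauto
  have h₂₄ : symmDiff X (X ∪ Y) = Y := hsymm _ _ _ fun i => by have := hXY' i; simp; tauto
  have h₂₃ : symmDiff X Y = X ∪ Y := hsymm _ _ _ fun i => by have := hXY' i; simp; tauto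
  simp only [hammingDist_piecewise huv, ne_eq, hcolor, h₁₂, h₁₃, h₁₄, h₃₄, h₂₄, h₂₃, hX, hY,
    card_union_of_disjoint hXY, true_and]
  rcases hS with hS | ⟨⟨i₀, hi₀S, hi₀X⟩, ⟨i₁, hi₁S, hi₁Y⟩⟩
  · left
    refine ⟨?_, ?_, ?_⟩ <;> intro i hi <;> simp [hS i hi]
  · right
    have hi₀Y := hXY' i₀ hi₀X
    have hi₁X : i₁ ∉ X := fun h => hXY' i₁ h hi₁Y
    refine ⟨?_, ?_, ?_, ?_, ?_, ?_⟩ <;> intro h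
    all_goals first
      | simpa [hi₀X, hi₀Y] using h i₀ hi₀S
      | simpa [hi₁X, hi₁Y] using h i₁ hi₁S

noncomputable def oneHot {ι β : Type*} [DecidableEq β] (s : ℝ) (w : ι → β) :
    EuclideanSpace ℝ (ι × β) :=
  WithLp.toLp 2 fun p => if w p.1 = p.2 then s else 0

lemma sum_sub_ite_sq {β : Type*} [Fintype β] [DecidableEq β] (s : ℝ) (b b' : β) :
    ∑ j, ((if b = j then s else 0) - if b' = j then s else 0) ^ 2 =
      if b = b' then 0 else 2 * s ^ 2 := by
  split_ifs with h
  · simp [h]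
  · have hterm : ∀ j, ((if b = j then s else 0) - if b' = j then s else 0) ^ 2 =
        (if b = j then s ^ 2 else 0) + if b' = j then s ^ 2 else 0 := by
      intro j
      by_cases h1 : b = j <;> by_cases h2 : b' = j <;> simp_all
    simp only [hterm, sum_add_distrib, sum_ite_eq, mem_univ, if_true]
    ring

lemma dist_oneHot {ι β : Type*} [Fintype ι] [Fintype β] [DecidableEq β] (s : ℝ)
    (w w' : ι → β) : dist (oneHot s w) (oneHot s w') = √(2 * s ^ 2 * hammingDist w w') := by
  rw [EuclideanSpace.dist_eq, Fintype.sum_prod_type]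
  congr 1
  simp only [oneHot, Real.dist_eq, sq_abs, sum_sub_ite_sq]
  rw [hammingDist, ← sum_boole, mul_sum]
  refine sum_congr rfl fun i _ => ?_
  split_ifs <;> simp_all

lemma exists_hammingDist_embedding (K N : ℕ) {c : ℝ} (hc : 0 ≤ c) :
    ∃ e : (Fin K → Fin N) → EuclideanSpace ℝ (Fin (K * N)),
      ∀ w w', dist (e w) (e w') = √(hammingDist w w' * c) :=
  ⟨fun w => LinearIsometryEquiv.piLpCongrLeft 2 ℝ ℝ finProdFinEquiv (oneHot √(c / 2) w),
    fun w w' => by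
      rw [LinearIsometryEquiv.dist_map, dist_oneHot, Real.sq_sqrt (by positivity)]
      ring_nf⟩

lemma exists_nat_sq_mul_eq {a b : ℝ} (ha : 0 < a) (hb : 0 < b)
    (hq : ∃ q : ℚ, (b / a) ^ 2 = (q : ℝ)) :
    ∃ q p : ℕ, 0 < q ∧ 0 < p ∧ b ^ 2 * q = a ^ 2 * p := by
  obtain ⟨r, hr⟩ := hq
  have hr₀ : 0 < r := by exact_mod_cast hr ▸ (by positivity : (0 : ℝ) < (b / a) ^ 2)
  have hnum : ((r.num.toNat : ℕ) : ℝ) = r.num := by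
    exact_mod_cast Int.toNat_of_nonneg (Rat.num_pos.2 hr₀).le
  refine ⟨r.den, r.num.toNat, r.den_pos, by have := Rat.num_pos.2 hr₀; omega, ?_⟩
  rw [hnum]
  rw [Rat.cast_def, div_pow, div_eq_div_iff (by positivity) (by positivity)] at hr
  linarith

/-- For positive reals `a, b` with `(b/a)²` rational, there exists `n` such that every
coloring of `ℝⁿ` with an arbitrary set of colors contains the vertex set of an
`a × b` rectangle (an isometric copy of `{(0,0), (a,0), (0,b), (a,b)}`) that is either
monochromatic or rainbow. -/
theorem rectangle_mono_or_rainbow (a b : ℝ) (ha : 0 < a) (hb : 0 < b)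
    (hq : ∃ q : ℚ, (b / a) ^ 2 = (q : ℝ)) :
    ∃ n : ℕ, 0 < n ∧
      ∀ (α : Type*) (χ : EuclideanSpace ℝ (Fin n) → α),
        ∃ x₁ x₂ x₃ x₄ : EuclideanSpace ℝ (Fin n),
          dist x₁ x₂ = a ∧ dist x₃ x₄ = a ∧
          dist x₁ x₃ = b ∧ dist x₂ x₄ = b ∧
          dist x₁ x₄ = Real.sqrt (a ^ 2 + b ^ 2) ∧
          dist x₂ x₃ = Real.sqrt (a ^ 2 + b ^ 2) ∧
          ((χ x₁ = χ x₂ ∧ χ x₁ = χ x₃ ∧ χ x₁ = χ x₄) ∨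
            (χ x₁ ≠ χ x₂ ∧ χ x₁ ≠ χ x₃ ∧ χ x₁ ≠ χ x₄ ∧
              χ x₂ ≠ χ x₃ ∧ χ x₂ ≠ χ x₄ ∧ χ x₃ ≠ χ x₄)) := by
  obtain ⟨q, p, hq₀, hp₀, hqp⟩ := exists_nat_sq_mul_eq ha hb hq
  obtain ⟨M, hM⟩ := exists_isCanonicalOn.{0, u_1} (q + p + 1) 2
  obtain ⟨point, hpoint⟩ :=
    exists_hammingDist_embedding (q + p + 1) (M + 1) (by positivity : 0 ≤ a ^ 2 / q)
  refine ⟨(q + p + 1) * (M + 1), by positivity, fun α χ => ?_⟩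
  obtain ⟨A, S, -, hA, hS⟩ := hM (fun _ => univ) (fun _ => by simp) (χ ∘ point)
  obtain ⟨w₁, w₂, w₃, w₄, h₁₂, h₃₄, h₁₃, h₂₄, h₁₄, h₂₃, hcolor⟩ :=
    exists_hammingRectangle_mono_or_rainbow hS hA hq₀ hp₀ (by simp)
  have hqa : √(q * (a ^ 2 / q)) = a := by
    rw [mul_div_cancel₀ _ (by positivity), Real.sqrt_sq ha.le]
  have hpb : √(p * (a ^ 2 / q)) = b := by
    rw [show (p : ℝ) * (a ^ 2 / q) = b ^ 2 by field_simp; linarith, Real.sqrt_sq hb.le]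
  have hqpab : ((q + p : ℕ) : ℝ) * (a ^ 2 / q) = a ^ 2 + b ^ 2 := by
    push_cast; field_simp; linarith
  exact ⟨point w₁, point w₂, point w₃, point w₄, by rw [hpoint, h₁₂, hqa],
    by rw [hpoint, h₃₄, hqa], by rw [hpoint, h₁₃, hpb], by rw [hpoint, h₂₄, hpb],
    by rw [hpoint, h₁₄, hqpab], by rw [hpoint, h₂₃, hqpab], hcolor⟩
end
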